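/- arXiv:2509.16148 — 4 statements merged into one kernel-verified Lean document; each statement's English description precedes it below -/
import Mathlib

section
/- Let B = B(c_B, r_B) be a Euclidean ball in R^n with r_B ≤ β·m(c_B), where β > 0 and m(x) = min(1, 1/|x|). Then e^{-(2+β)β}·e^{-|c_B|²}·|B| ≤ γ(B) ≤ e^{(2+β)β}·e^{-|c_B|²}·|B|, where γ(B) = ∫_B e^{-|y|²} dy and |B| is the Lebesgue measure of B. -/
open MeasureTheory Metric Set ENNReal

noncomputable def mCut {n : ℕ} (x : EuclideanSpace ℝ (Fin n)) : ℝ :=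
  if ‖x‖ ≤ 1 then 1 else 1 / ‖x‖

noncomputable def gaussM (n : ℕ) : Measure (EuclideanSpace ℝ (Fin n)) :=
  volume.withDensity fun y => ENNReal.ofReal (Real.exp (-‖y‖ ^ 2))

noncomputable def dtt : Measure ℝ :=
  (volume.restrict (Set.Ioi (0 : ℝ))).withDensity fun t => ENNReal.ofReal (1 / t)

noncomputable def tentMeasure (n : ℕ) : Measure (EuclideanSpace ℝ (Fin n) × ℝ) :=
  (gaussM n).prod dtt

def gaussCone {n : ℕ} (α β : ℝ) (x : EuclideanSpace ℝ (Fin n)) :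
    Set (EuclideanSpace ℝ (Fin n) × ℝ) :=
  {p | 0 < p.2 ∧ dist p.1 x < min (α * p.2) (β * mCut p.1)}

def gaussTent {n : ℕ} (α β : ℝ) (B : Set (EuclideanSpace ℝ (Fin n))) :
    Set (EuclideanSpace ℝ (Fin n) × ℝ) :=
  {p | 0 < p.2 ∧ min (α * p.2) (β * mCut p.1) ≤ Metric.infDist p.1 Bᶜ}

noncomputable def areaS {n : ℕ} (q α β : ℝ) (f : EuclideanSpace ℝ (Fin n) × ℝ → ℝ)
    (x : EuclideanSpace ℝ (Fin n)) : ℝ≥0∞ :=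
  (∫⁻ p in gaussCone α β x,
      ENNReal.ofReal (|f p| ^ q) /
        gaussM n (Metric.ball p.1 (min (α * p.2) (β * mCut p.1))) ∂ tentMeasure n) ^ (1 / q)

noncomputable def areaSInf {n : ℕ} (α β : ℝ) (f : EuclideanSpace ℝ (Fin n) × ℝ → ℝ)
    (x : EuclideanSpace ℝ (Fin n)) : ℝ≥0∞ :=
  ⨆ p ∈ gaussCone α β x, ENNReal.ofReal |f p|

theorem stmt1 {n : ℕ} (β : ℝ) (hβ : 0 < β) (c : EuclideanSpace ℝ (Fin n)) (r : ℝ)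
    (hr : 0 < r) (hadm : r ≤ β * mCut c) :
    Real.exp (-(2 + β) * β) * Real.exp (-‖c‖ ^ 2) * (volume (Metric.ball c r)).toReal
        ≤ (gaussM n (Metric.ball c r)).toReal ∧
      (gaussM n (Metric.ball c r)).toReal
        ≤ Real.exp ((2 + β) * β) * Real.exp (-‖c‖ ^ 2) * (volume (Metric.ball c r)).toReal := by
  have hrβ : r ≤ β := by
    rcases le_or_gt ‖c‖ 1 with h | h
    · simpa [mCut, h] using hadm
    · have : r ≤ β * (1 / ‖c‖) := by simpa [mCut, not_le.2 h] using hadm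
      have h1 : β * (1 / ‖c‖) ≤ β := by
        rw [mul_one_div]
        exact div_le_self hβ.le h.le
      linarith
  have hrc : r * ‖c‖ ≤ β := by
    rcases le_or_gt ‖c‖ 1 with h | h
    · nlinarith [norm_nonneg c]
    · have h0 : (0:ℝ) < ‖c‖ := lt_trans one_pos h
      have : r ≤ β * (1 / ‖c‖) := by simpa [mCut, not_le.2 h] using hadm
      calc r * ‖c‖ ≤ β * (1 / ‖c‖) * ‖c‖ := by nlinarith
        _ = β := by field_simp
  have key : ∀ y ∈ Metric.ball c r, |‖y‖ ^ 2 - ‖c‖ ^ 2| ≤ (2 + β) * β := by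
    intro y hy
    have hd : dist y c < r := Metric.mem_ball.1 hy
    have h1 : |‖y‖ - ‖c‖| ≤ dist y c := abs_norm_sub_norm_le y c
    have h2 : |‖y‖ - ‖c‖| < r := lt_of_le_of_lt h1 hd
    rw [abs_lt] at h2
    rw [abs_le]
    constructor <;> nlinarith [norm_nonneg y, norm_nonneg c, abs_nonneg (‖y‖ - ‖c‖)]
  set B := Metric.ball c r with hB
  have hmeas : MeasurableSet B := measurableSet_ball
  have hrepr : gaussM n B = ∫⁻ y in B, ENNReal.ofReal (Real.exp (-‖y‖ ^ 2)) ∂volume := by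
    rw [gaussM, withDensity_apply _ hmeas]
  have hmble : Measurable fun y : EuclideanSpace ℝ (Fin n) =>
      ENNReal.ofReal (Real.exp (-‖y‖ ^ 2)) := by
    apply Measurable.ennreal_ofReal
    exact (measurable_norm.pow_const 2).neg.exp
  have hupper : gaussM n B ≤
      ENNReal.ofReal (Real.exp ((2 + β) * β + -‖c‖ ^ 2)) * volume B := by
    rw [hrepr]
    calc ∫⁻ y in B, ENNReal.ofReal (Real.exp (-‖y‖ ^ 2)) ∂volume
        ≤ ∫⁻ _ in B, ENNReal.ofReal (Real.exp ((2 + β) * β + -‖c‖ ^ 2)) ∂volume := by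
          refine setLIntegral_mono measurable_const fun y hy => ?_
          refine ENNReal.ofReal_le_ofReal (Real.exp_le_exp.2 ?_)
          have := key y hy
          rw [abs_le] at this
          linarith
      _ = ENNReal.ofReal (Real.exp ((2 + β) * β + -‖c‖ ^ 2)) * volume B :=
          setLIntegral_const _ _
  have hlower : ENNReal.ofReal (Real.exp (-(2 + β) * β + -‖c‖ ^ 2)) * volume B ≤
      gaussM n B := by
    rw [hrepr]
    calc ENNReal.ofReal (Real.exp (-(2 + β) * β + -‖c‖ ^ 2)) * volume B
        = ∫⁻ _ in B, ENNReal.ofReal (Real.exp (-(2 + β) * β + -‖c‖ ^ 2)) ∂volume :=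
          (setLIntegral_const _ _).symm
      _ ≤ ∫⁻ y in B, ENNReal.ofReal (Real.exp (-‖y‖ ^ 2)) ∂volume := by
          refine setLIntegral_mono hmble fun y hy => ?_
          refine ENNReal.ofReal_le_ofReal (Real.exp_le_exp.2 ?_)
          have := key y hy
          rw [abs_le] at this
          linarith
  have hvol : volume B ≠ ⊤ := (measure_ball_lt_top).ne
  have hfin : gaussM n B ≠ ⊤ := by
    refine ne_top_of_le_ne_top ?_ hupper
    exact ENNReal.mul_ne_top ENNReal.ofReal_ne_top hvol
  have hmulT : ∀ a : ℝ, (ENNReal.ofReal (Real.exp a) * volume B).toReal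
      = Real.exp a * (volume B).toReal := by
    intro a
    rw [ENNReal.toReal_mul, ENNReal.toReal_ofReal (Real.exp_nonneg a)]
  constructor
  · have := ENNReal.toReal_mono hfin hlower
    rw [hmulT] at this
    rw [← Real.exp_add]
    exact this
  · have := ENNReal.toReal_mono (ENNReal.mul_ne_top ENNReal.ofReal_ne_top hvol) hupper
    rw [hmulT] at this
    rw [← Real.exp_add]
    exact this
end

section
/- Let β ≥ 1 and let B = B(c_B, r_B) be a ball in R^n with r_B ≤ β·m(c_B), where m(x) = min(1, 1/|x|). Suppose inf_{y ∈ B̄} |y| ≥ √β. Define the Gaussian tent T_γ^{α,β}(B) = {(y,t) ∈ R^n × (0,∞) : dist(y, B^c) ≥ min(αt, β·m(y))} and the classical tent T^α(B) = {(y,t) : dist(y, B^c) ≥ αt}. Then if r_B < β·m(c_B), T_γ^{α,β}(B) = T^α(B); and if r_B = β·m(c_B), T_γ^{α,β}(B) = T^α(B) ∪ ({c_B} × (0,∞)). -/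
open MeasureTheory Metric Set ENNReal

lemma mCut_of_one_le' {n : ℕ} {x : EuclideanSpace ℝ (Fin n)} (h : 1 ≤ ‖x‖) :
    mCut x = ‖x‖⁻¹ := by
  unfold mCut
  rcases eq_or_lt_of_le h with h1 | h1
  · simp [← h1]
  · rw [if_neg (not_le.mpr h1), one_div]

lemma mCut_pos' {n : ℕ} (x : EuclideanSpace ℝ (Fin n)) : 0 < mCut x := by
  unfold mCut
  split_ifs with h
  · norm_num
  · have : (0:ℝ) < ‖x‖ := lt_trans one_pos (not_le.mp h)
    positivity

lemma mem_compl_ball_aux {E : Type*} [NormedAddCommGroup E] [NormedSpace ℝ E]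
    {c : E} {r : ℝ} (hc : c ≠ 0) (hr0 : 0 ≤ r) :
    c + r • (‖c‖⁻¹ • c) ∈ (Metric.ball c r)ᶜ := by
  have hu : ‖‖c‖⁻¹ • c‖ = 1 := norm_smul_inv_norm hc
  simp only [mem_compl_iff, Metric.mem_ball, not_lt, dist_eq_norm, add_sub_cancel_left,
    norm_smul, hu, Real.norm_eq_abs, abs_of_nonneg hr0, mul_one, le_refl]

lemma infDist_compl_ball_le' {E : Type*} [NormedAddCommGroup E] [NormedSpace ℝ E]
    (c y : E) (r : ℝ) (hc : c ≠ 0) (hd : dist y c ≤ r) :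
    Metric.infDist y (Metric.ball c r)ᶜ ≤ r - dist y c := by
  have hr0 : 0 ≤ r := le_trans dist_nonneg hd
  by_cases hyc : y = c
  · subst hyc
    have hu : ‖‖y‖⁻¹ • y‖ = 1 := norm_smul_inv_norm hc
    calc Metric.infDist y (Metric.ball y r)ᶜ ≤ dist y (y + r • (‖y‖⁻¹ • y)) :=
          Metric.infDist_le_dist_of_mem (mem_compl_ball_aux hc hr0)
      _ = r - dist y y := by
          simp [dist_eq_norm, norm_smul, hu, abs_of_nonneg hr0]
  · set d := dist y c with hdd
    have hd0 : 0 < d := dist_pos.mpr hyc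
    set u : E := ‖y - c‖⁻¹ • (y - c) with hu'
    have hu : ‖u‖ = 1 := norm_smul_inv_norm (sub_ne_zero.mpr hyc)
    have hyc' : y - c = d • u := by
      rw [hu', smul_smul, hdd, dist_eq_norm]
      rw [mul_inv_cancel₀ (by rw [← dist_eq_norm]; exact hd0.ne'), one_smul]
    have hz : c + r • u ∈ (Metric.ball c r)ᶜ := by
      simp only [mem_compl_iff, Metric.mem_ball, not_lt, dist_eq_norm, add_sub_cancel_left,
        norm_smul, hu, Real.norm_eq_abs, abs_of_nonneg hr0, mul_one, le_refl]
    calc Metric.infDist y (Metric.ball c r)ᶜ ≤ dist y (c + r • u) :=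
          Metric.infDist_le_dist_of_mem hz
      _ = r - d := by
          have h2 : y - (c + r • u) = (d - r) • u := by
            rw [sub_smul, ← hyc']; abel
          rw [dist_eq_norm, h2, norm_smul, hu, mul_one, Real.norm_eq_abs,
            abs_of_nonpos (by linarith)]
          ring

lemma tent_key_lemma {n : ℕ} {β : ℝ} (hβ : 1 ≤ β)
    {c y : EuclideanSpace ℝ (Fin n)} {r : ℝ} (hr : 0 < r) (hadm : r ≤ β * mCut c)
    (hq : ∀ z ∈ Metric.closedBall c r, Real.sqrt β ≤ ‖z‖)
    (hy : y ∈ Metric.ball c r)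
    (h : β * mCut y ≤ Metric.infDist y (Metric.ball c r)ᶜ) :
    y = c ∧ r = β * mCut c := by
  set s := Real.sqrt β with hsdef
  have hs1 : 1 ≤ s := Real.one_le_sqrt.mpr hβ
  have hss : s * s = β := Real.mul_self_sqrt (by linarith)
  have hc : s ≤ ‖c‖ := hq c (Metric.mem_closedBall_self hr.le)
  have hc1 : 1 ≤ ‖c‖ := le_trans hs1 hc
  have hc0 : (0:ℝ) < ‖c‖ := lt_of_lt_of_le one_pos hc1
  have mc : mCut c = ‖c‖⁻¹ := mCut_of_one_le' hc1
  have hcinv : ‖c‖ * ‖c‖⁻¹ = 1 := mul_inv_cancel₀ hc0.ne'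
  have hcr : ‖c‖ * r ≤ β := by
    rw [mc] at hadm
    nlinarith [mul_le_mul_of_nonneg_left hadm hc0.le]
  have hy' : s ≤ ‖y‖ := hq y (Metric.ball_subset_closedBall hy)
  have hy1 : 1 ≤ ‖y‖ := le_trans hs1 hy'
  have hy0 : (0:ℝ) < ‖y‖ := lt_of_lt_of_le one_pos hy1
  have my : mCut y = ‖y‖⁻¹ := mCut_of_one_le' hy1
  have hyinv : ‖y‖ * ‖y‖⁻¹ = 1 := mul_inv_cancel₀ hy0.ne'
  set d := dist y c with hdd
  have hd : d < r := Metric.mem_ball.mp hy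
  have hd0 : 0 ≤ d := dist_nonneg
  have hcne : c ≠ 0 := by
    intro h0; rw [h0, norm_zero] at hc0; exact lt_irrefl _ hc0
  have hidl : Metric.infDist y (Metric.ball c r)ᶜ ≤ r - d :=
    infDist_compl_ball_le' c y r hcne hd.le
  have h2 : β * ‖y‖⁻¹ ≤ r - d := by
    rw [my] at h; exact le_trans h hidl
  have hkey : β ≤ ‖y‖ * (r - d) := by
    nlinarith [mul_le_mul_of_nonneg_left h2 hy0.le]
  have hyle : ‖y‖ ≤ ‖c‖ + d := by
    have heq : y = c + (y - c) := by abel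
    calc ‖y‖ = ‖c + (y - c)‖ := by rw [← heq]
      _ ≤ ‖c‖ + ‖y - c‖ := norm_add_le _ _
      _ = ‖c‖ + d := by rw [hdd, dist_eq_norm]
  have hrs : r ≤ s := by
    nlinarith [mul_le_mul_of_nonneg_right hc (by linarith : (0:ℝ) ≤ s)]
  have hrc : r ≤ ‖c‖ := hrs.trans hc
  have hdz : d = 0 := by
    have hle : d ≤ 0 := by
      nlinarith [mul_le_mul_of_nonneg_right hyle (by linarith : (0:ℝ) ≤ r - d)]
    exact le_antisymm hle hd0
  have hyceq : y = c := by rw [hdd] at hdz; exact dist_eq_zero.mp hdz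
  refine ⟨hyceq, ?_⟩
  have hkey2 : β ≤ ‖c‖ * r := by
    rw [hyceq] at hkey; rw [hdz] at hkey; linarith [hkey]
  rw [mc]
  field_simp
  linarith

theorem stmt3 {n : ℕ} (α β : ℝ) (hα : 0 < α) (hβ : 1 ≤ β)
    (c : EuclideanSpace ℝ (Fin n)) (r : ℝ) (hr : 0 < r) (hadm : r ≤ β * mCut c)
    (hq : ∀ y ∈ Metric.closedBall c r, Real.sqrt β ≤ ‖y‖) :
    (r < β * mCut c →
      gaussTent α β (Metric.ball c r) =
        {p : EuclideanSpace ℝ (Fin n) × ℝ |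
          0 < p.2 ∧ α * p.2 ≤ Metric.infDist p.1 (Metric.ball c r)ᶜ}) ∧
    (r = β * mCut c →
      gaussTent α β (Metric.ball c r) =
        {p : EuclideanSpace ℝ (Fin n) × ℝ |
          0 < p.2 ∧ α * p.2 ≤ Metric.infDist p.1 (Metric.ball c r)ᶜ}
          ∪ {p : EuclideanSpace ℝ (Fin n) × ℝ | p.1 = c ∧ 0 < p.2}) := by
  have hs1 : 1 ≤ Real.sqrt β := Real.one_le_sqrt.mpr hβ
  have hc : Real.sqrt β ≤ ‖c‖ := hq c (Metric.mem_closedBall_self hr.le)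
  have hc0 : (0:ℝ) < ‖c‖ := lt_of_lt_of_le one_pos (le_trans hs1 hc)
  have hcne : c ≠ 0 := by
    intro h0; rw [h0, norm_zero] at hc0; exact lt_irrefl _ hc0
  have hforward : ∀ p : EuclideanSpace ℝ (Fin n) × ℝ, p ∈ gaussTent α β (Metric.ball c r) →
      (0 < p.2 ∧ α * p.2 ≤ Metric.infDist p.1 (Metric.ball c r)ᶜ) ∨
      (p.1 = c ∧ r = β * mCut c ∧ 0 < p.2) := by
    rintro ⟨y, t⟩ ⟨ht, hmin⟩
    rcases le_total (α * t) (β * mCut y) with hle | hle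
    · rw [min_eq_left hle] at hmin
      exact Or.inl ⟨ht, hmin⟩
    · rw [min_eq_right hle] at hmin
      have hyb : y ∈ Metric.ball c r := by
        by_contra hyn
        have h0 : Metric.infDist y (Metric.ball c r)ᶜ = 0 :=
          Metric.infDist_zero_of_mem hyn
        have := mCut_pos' y
        rw [h0] at hmin
        nlinarith
      obtain ⟨hyc, hrc⟩ := tent_key_lemma hβ hr hadm hq hyb hmin
      exact Or.inr ⟨hyc, hrc, ht⟩
  constructor
  · intro hlt
    ext ⟨y, t⟩
    constructor
    · intro hp
      rcases hforward _ hp with h | ⟨_, hrc, _⟩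
      · exact h
      · exact absurd hrc (ne_of_lt hlt)
    · rintro ⟨ht, h⟩
      exact ⟨ht, le_trans (min_le_left _ _) h⟩
  · intro heq
    ext ⟨y, t⟩
    constructor
    · intro hp
      rcases hforward _ hp with h | ⟨hyc, _, ht⟩
      · exact Or.inl h
      · exact Or.inr ⟨hyc, ht⟩
    · rintro (⟨ht, h⟩ | ⟨hyc, ht⟩)
      · exact ⟨ht, le_trans (min_le_left _ _) h⟩
      · refine ⟨ht, ?_⟩
        simp only at hyc
        rw [hyc]
        have hne : ((Metric.ball c r)ᶜ : Set (EuclideanSpace ℝ (Fin n))).Nonempty :=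
          ⟨c + r • (‖c‖⁻¹ • c), mem_compl_ball_aux hcne hr.le⟩
        have hinf : r ≤ Metric.infDist c (Metric.ball c r)ᶜ := by
          by_contra hlt
          rcases (Metric.infDist_lt_iff hne).mp (not_le.mp hlt) with ⟨z, hz, hzd⟩
          exact hz (by rwa [Metric.mem_ball, dist_comm])
        calc min (α * t) (β * mCut c) ≤ β * mCut c := min_le_right _ _
          _ = r := heq.symm
          _ ≤ _ := hinf
end

section
/- Let a be a T^{1,q}_{α,β}(γ) δ-atom for 1 ≤ q < ∞: supp(a) ⊆ T_γ^{α,β}(B) for some ball B with r_B ≤ δ·m(c_B), and (∬ |a(y,t)|^q dγ(y) dt/t)^{1/q} ≤ γ(B)^{-(1-1/q)}. Then ∫_{R^n} S_{q,α,β}a(x) dγ(x) ≤ 1, where S_{q,α,β}a(x) = (∬_{Γ_γ^{α,β}(x)} |a(y,t)|^q / γ(B(y, min(αt, m_β(y)))) dγ(y) dt/t)^{1/q}. -/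
open MeasureTheory Metric Set ENNReal

lemma measurable_mCut {n : ℕ} : Measurable (mCut (n := n)) := by
  unfold mCut
  exact Measurable.ite (measurableSet_le measurable_norm measurable_const)
    measurable_const (measurable_const.div measurable_norm)

theorem stmt8 {n : ℕ} (q α β δ : ℝ) (hq : 1 ≤ q) (hα : 0 < α) (hβ : 0 < β) (hδ : 0 < δ)
    (c : EuclideanSpace ℝ (Fin n)) (r : ℝ) (hr : 0 < r) (hadm : r ≤ δ * mCut c)
    (a : EuclideanSpace ℝ (Fin n) × ℝ → ℝ) (hmeas : Measurable a)
    (hsupp : ∀ p, p ∉ gaussTent α β (Metric.ball c r) → a p = 0)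
    (hnorm : (∫⁻ p, ENNReal.ofReal (|a p| ^ q) ∂ tentMeasure n) ^ (1 / q)
        ≤ gaussM n (Metric.ball c r) ^ (-(1 - 1 / q))) :
    ∫⁻ x, areaS q α β a x ∂ gaussM n ≤ 1 := by
  classical
  have hq0 : (0 : ℝ) < q := lt_of_lt_of_le one_pos hq
  haveI : SFinite (gaussM n) := by unfold gaussM; infer_instance
  haveI : SFinite dtt := by unfold dtt; infer_instance
  haveI : SFinite (tentMeasure n) := by unfold tentMeasure; infer_instance
  set γ := gaussM n with hγdef
  set μ := tentMeasure n with hμdef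
  set B := Metric.ball c r with hBdef
  set ρ : EuclideanSpace ℝ (Fin n) × ℝ → ℝ := fun p => min (α * p.2) (β * mCut p.1) with hρdef
  have hρm : Measurable ρ :=
    (measurable_const.mul measurable_snd).min
      (measurable_const.mul (measurable_mCut.comp measurable_fst))
  set d : EuclideanSpace ℝ (Fin n) × ℝ → ℝ≥0∞ := fun p => γ (Metric.ball p.1 (ρ p)) with hddef
  -- measurability of the denominator
  have hdm : Measurable d := by
    have hT : MeasurableSet
        {z : (EuclideanSpace ℝ (Fin n) × ℝ) × EuclideanSpace ℝ (Fin n) |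
          dist z.2 z.1.1 < ρ z.1} :=
      measurableSet_lt (measurable_snd.dist (measurable_fst.fst))
        (hρm.comp measurable_fst)
    have h := measurable_measure_prodMk_left (ν := γ) hT
    have heq : d = fun p => γ (Prod.mk p ⁻¹'
        {z : (EuclideanSpace ℝ (Fin n) × ℝ) × EuclideanSpace ℝ (Fin n) |
          dist z.2 z.1.1 < ρ z.1}) := by
      rfl
    rw [heq]
    exact h
  set F : EuclideanSpace ℝ (Fin n) × ℝ → ℝ≥0∞ :=
    fun p => ENNReal.ofReal (|a p| ^ q) / d p with hFdef
  have hFm : Measurable F :=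
    ((hmeas.abs.pow_const q).ennreal_ofReal).div hdm
  -- cone sets are measurable
  have hconem : ∀ x : EuclideanSpace ℝ (Fin n), MeasurableSet (gaussCone α β x) := by
    intro x
    have : gaussCone α β x
        = {p : EuclideanSpace ℝ (Fin n) × ℝ | 0 < p.2} ∩ {p | dist p.1 x < ρ p} := rfl
    rw [this]
    exact (measurableSet_lt measurable_const measurable_snd).inter
      (measurableSet_lt (measurable_fst.dist measurable_const) hρm)
  set I : EuclideanSpace ℝ (Fin n) → ℝ≥0∞ :=
    fun x => ∫⁻ p, (gaussCone α β x).indicator F p ∂μ with hIdef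
  have hareaS : ∀ x, areaS q α β a x = (I x) ^ (1 / q) := by
    intro x
    rw [hIdef]
    simp only [areaS, lintegral_indicator (hconem x)]
    rfl
  -- the uncurried integrand is measurable
  have hGm : Measurable fun z : EuclideanSpace ℝ (Fin n) × (EuclideanSpace ℝ (Fin n) × ℝ) =>
      (gaussCone α β z.1).indicator F z.2 := by
    have hS : MeasurableSet {z : EuclideanSpace ℝ (Fin n) × (EuclideanSpace ℝ (Fin n) × ℝ) |
        z.2 ∈ gaussCone α β z.1} := by
      have : {z : EuclideanSpace ℝ (Fin n) × (EuclideanSpace ℝ (Fin n) × ℝ) |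
          z.2 ∈ gaussCone α β z.1}
          = {z | 0 < z.2.2} ∩ {z | dist z.2.1 z.1 < ρ z.2} := rfl
      rw [this]
      exact (measurableSet_lt measurable_const measurable_snd.snd).inter
        (measurableSet_lt (measurable_snd.fst.dist measurable_fst) (hρm.comp measurable_snd))
    have hrw : (fun z : EuclideanSpace ℝ (Fin n) × (EuclideanSpace ℝ (Fin n) × ℝ) =>
        (gaussCone α β z.1).indicator F z.2)
        = {z : EuclideanSpace ℝ (Fin n) × (EuclideanSpace ℝ (Fin n) × ℝ) |
            z.2 ∈ gaussCone α β z.1}.indicator (fun z => F z.2) := by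
      ext z
      by_cases hz : z.2 ∈ gaussCone α β z.1 <;>
        simp [Set.indicator_apply, hz]
    rw [hrw]
    exact (hFm.comp measurable_snd).indicator hS
  have hIm : Measurable I := hGm.lintegral_prod_right'
  -- Step A: Tonelli bound
  have hA : ∫⁻ x, I x ∂γ ≤ ∫⁻ p, ENNReal.ofReal (|a p| ^ q) ∂μ := by
    rw [hIdef]
    rw [MeasureTheory.lintegral_lintegral_swap hGm.aemeasurable]
    refine lintegral_mono fun p => ?_
    have hrew : (fun x : EuclideanSpace ℝ (Fin n) => (gaussCone α β x).indicator F p)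
        = {x : EuclideanSpace ℝ (Fin n) | p ∈ gaussCone α β x}.indicator fun _ => F p := by
      ext x
      by_cases hx : p ∈ gaussCone α β x <;> simp [Set.indicator_apply, hx]
    rw [hrew]
    have hsub : {x : EuclideanSpace ℝ (Fin n) | p ∈ gaussCone α β x}
        ⊆ Metric.ball p.1 (ρ p) := by
      intro x hx
      exact Metric.mem_ball'.2 hx.2
    have hms : MeasurableSet {x : EuclideanSpace ℝ (Fin n) | p ∈ gaussCone α β x} := by
      have : {x : EuclideanSpace ℝ (Fin n) | p ∈ gaussCone α β x}
          = {x : EuclideanSpace ℝ (Fin n) | 0 < p.2} ∩ {x | dist p.1 x < ρ p} := rfl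
      rw [this]
      exact (MeasurableSet.const _).inter
        (measurableSet_lt (measurable_const.dist measurable_id) measurable_const)
    rw [lintegral_indicator hms, setLIntegral_const]
    calc F p * γ {x : EuclideanSpace ℝ (Fin n) | p ∈ gaussCone α β x} ≤ F p * d p :=
          mul_le_mul_right (measure_mono hsub) _
      _ ≤ ENNReal.ofReal (|a p| ^ q) := by
          rw [hFdef]
          simp only
          rw [div_eq_mul_inv, mul_assoc]
          exact le_trans (mul_le_mul_right (ENNReal.inv_mul_le_one (a := d p)) _)
            (by rw [mul_one])
  -- Step C: support in B
  have hsuppI : ∀ x : EuclideanSpace ℝ (Fin n), x ∉ B → I x = 0 := by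
    intro x hx
    rw [hIdef]
    simp only
    have hz : ∀ p : EuclideanSpace ℝ (Fin n) × ℝ, (gaussCone α β x).indicator F p = 0 := by
      intro p
      by_cases hp : p ∈ gaussCone α β x
      · rw [Set.indicator_of_mem hp]
        have ha0 : a p = 0 := by
          by_contra hap
          have hpt : p ∈ gaussTent α β B := by
            by_contra h'
            exact hap (hsupp p h')
          have h1 : ρ p ≤ Metric.infDist p.1 Bᶜ := hpt.2
          have h2 : dist p.1 x < ρ p := hp.2
          have h3 : Metric.infDist p.1 Bᶜ ≤ dist p.1 x :=
            Metric.infDist_le_dist_of_mem hx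
          linarith
        rw [hFdef]
        simp [ha0, Real.zero_rpow (ne_of_gt hq0)]
      · rw [Set.indicator_of_notMem hp]
    rw [lintegral_congr hz, lintegral_zero]
  -- γ B is nonzero and finite
  have hBmeas : MeasurableSet B := measurableSet_ball
  have hγBtop : γ B ≠ ⊤ := by
    have h1 : γ B ≤ volume B := by
      rw [hγdef, gaussM, withDensity_apply _ hBmeas]
      calc ∫⁻ y in B, ENNReal.ofReal (Real.exp (-‖y‖ ^ 2)) ∂volume
          ≤ ∫⁻ _ in B, 1 ∂volume := by
            refine lintegral_mono fun y => ?_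
            rw [← ENNReal.ofReal_one]
            exact ENNReal.ofReal_le_ofReal
              (Real.exp_le_one_iff.2 (neg_nonpos.2 (by positivity)))
        _ = volume B := setLIntegral_one B
    exact ne_top_of_le_ne_top (measure_ball_lt_top).ne h1
  have hγB0 : γ B ≠ 0 := by
    have hlow : ENNReal.ofReal (Real.exp (-(‖c‖ + r) ^ 2)) * volume B ≤ γ B := by
      rw [hγdef, gaussM, withDensity_apply _ hBmeas, ← setLIntegral_const]
      refine setLIntegral_mono ((measurable_norm.pow_const 2).neg.exp.ennreal_ofReal) ?_
      intro y hy
      refine ENNReal.ofReal_le_ofReal (Real.exp_le_exp.2 (neg_le_neg ?_))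
      have h1 : ‖y‖ ≤ ‖c‖ + r := by
        have h2 := mem_ball_iff_norm.1 hy
        calc ‖y‖ = ‖y - c + c‖ := by rw [sub_add_cancel]
          _ ≤ ‖y - c‖ + ‖c‖ := norm_add_le _ _
          _ ≤ ‖c‖ + r := by linarith
      exact pow_le_pow_left₀ (norm_nonneg y) h1 2
    intro h0
    rw [h0] at hlow
    have hball : 0 < volume B := measure_ball_pos volume c hr
    have hε : 0 < ENNReal.ofReal (Real.exp (-(‖c‖ + r) ^ 2)) :=
      ENNReal.ofReal_pos.2 (Real.exp_pos _)
    exact absurd (le_antisymm hlow zero_le) (ne_of_gt (ENNReal.mul_pos hε.ne' hball.ne'))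
  -- rewrite the integral as an integral over B
  have hrestr : ∫⁻ x, areaS q α β a x ∂γ = ∫⁻ x in B, (I x) ^ (1 / q) ∂γ := by
    rw [← lintegral_indicator hBmeas]
    refine lintegral_congr fun x => ?_
    rw [hareaS x]
    by_cases hx : x ∈ B
    · rw [Set.indicator_of_mem hx]
    · rw [Set.indicator_of_notMem hx, hsuppI x hx,
        ENNReal.zero_rpow_of_pos (by positivity)]
  rw [hrestr]
  rcases eq_or_lt_of_le hq with hq1 | hq1
  · -- q = 1
    subst hq1
    simp only [one_div, inv_one, ENNReal.rpow_one]
    calc ∫⁻ x in B, I x ∂γ ≤ ∫⁻ x, I x ∂γ := setLIntegral_le_lintegral B I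
      _ ≤ ∫⁻ p, ENNReal.ofReal (|a p| ^ (1:ℝ)) ∂μ := hA
      _ ≤ 1 := by
          have h := hnorm
          simp only [one_div, inv_one, ENNReal.rpow_one, sub_self, neg_zero,
            ENNReal.rpow_zero] at h
          exact h
  · -- 1 < q
    have hpq : q.HolderConjugate (q / (q - 1)) := Real.HolderConjugate.conjExponent hq1
    have hone_div : 1 / (q / (q - 1)) = 1 - 1 / q := by
      rw [one_div_div, sub_div, div_self (ne_of_gt hq0)]
    have hholder := ENNReal.lintegral_mul_le_Lp_mul_Lq (γ.restrict B) hpq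
      (f := fun x => (I x) ^ (1 / q)) (g := fun _ => 1)
      ((hIm.pow_const _).aemeasurable) aemeasurable_const
    simp only [mul_one, Pi.mul_apply] at hholder
    have hfq : ∀ x : EuclideanSpace ℝ (Fin n), ((I x) ^ (1 / q)) ^ q = I x := by
      intro x
      rw [← ENNReal.rpow_mul, one_div_mul_cancel (ne_of_gt hq0), ENNReal.rpow_one]
    have hg1 : (∫⁻ _ in B, (1:ℝ≥0∞) ^ (q / (q - 1)) ∂γ) = γ B := by
      simp
    simp only [hfq, hg1] at hholder
    calc ∫⁻ x in B, (I x) ^ (1 / q) ∂γ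
        ≤ (∫⁻ x in B, I x ∂γ) ^ (1 / q) * γ B ^ (1 / (q / (q - 1))) := hholder
      _ ≤ (∫⁻ p, ENNReal.ofReal (|a p| ^ q) ∂μ) ^ (1 / q) * γ B ^ (1 - 1 / q) := by
          rw [hone_div]
          refine mul_le_mul_left (ENNReal.rpow_le_rpow ?_ (by positivity)) _
          exact le_trans (setLIntegral_le_lintegral B I) hA
      _ ≤ γ B ^ (-(1 - 1 / q)) * γ B ^ (1 - 1 / q) := mul_le_mul_left hnorm _
      _ = 1 := by
          rw [← ENNReal.rpow_add _ _ hγB0 hγBtop, neg_add_cancel, ENNReal.rpow_zero]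
end

section
/- For every measurable f : R^{n+1}_+ → R, α, β > 0 and 1 ≤ q < ∞, the area function S_{q,α,β}f(x) = (∬_{Γ_γ^{α,β}(x)} |f(y,t)|^q / γ(B(y, min(αt, m_β(y)))) dγ(y) dt/t)^{1/q} is lower semicontinuous on R^n. -/
open MeasureTheory Metric Set ENNReal

lemma measurable_cone {n : ℕ} (α β : ℝ) (x : EuclideanSpace ℝ (Fin n)) :
    MeasurableSet (gaussCone α β x) := by
  apply MeasurableSet.inter
  · exact measurableSet_lt measurable_const measurable_snd
  · exact measurableSet_lt (continuous_fst.dist continuous_const).measurable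
      ((measurable_const.mul measurable_snd).min
        (measurable_const.mul (measurable_mCut.comp measurable_fst)))

theorem stmt10 {n : ℕ} (q α β : ℝ) (hq : 1 ≤ q) (hα : 0 < α) (hβ : 0 < β)
    (f : EuclideanSpace ℝ (Fin n) × ℝ → ℝ) (hf : Measurable f) :
    LowerSemicontinuous (areaS q α β f) := by
  have hq0 : (0 : ℝ) < q := lt_of_lt_of_le one_pos hq
  set g : EuclideanSpace ℝ (Fin n) × ℝ → ℝ≥0∞ := fun p =>
    ENNReal.ofReal (|f p| ^ q) /
      gaussM n (Metric.ball p.1 (min (α * p.2) (β * mCut p.1))) with hg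
  set ν := (tentMeasure n).withDensity g with hν
  have key : ∀ x, areaS q α β f x = ν (gaussCone α β x) ^ (1 / q) := by
    intro x
    rw [hν, withDensity_apply _ (measurable_cone α β x)]
    rfl
  have LSCnu : LowerSemicontinuous fun x => ν (gaussCone α β x) := by
    intro x y hy
    set C : ℕ → Set (EuclideanSpace ℝ (Fin n) × ℝ) := fun k =>
      {p | 0 < p.2 ∧ dist p.1 x + 1 / (k + 1) ≤ min (α * p.2) (β * mCut p.1)} with hC
    have hmono : Monotone C := by
      intro a b hab p hp
      refine ⟨hp.1, le_trans (add_le_add (le_refl _) ?_) hp.2⟩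
      apply one_div_le_one_div_of_le
      · positivity
      · have : (a : ℝ) ≤ b := Nat.cast_le.2 hab
        linarith
    have hun : gaussCone α β x = ⋃ k, C k := by
      ext p
      constructor
      · rintro ⟨h1, h2⟩
        obtain ⟨k, hk⟩ := exists_nat_one_div_lt (sub_pos.2 h2)
        exact Set.mem_iUnion.2 ⟨k, h1, by push_cast at hk ⊢; linarith⟩
      · rintro ⟨_, ⟨k, rfl⟩, h1, h2⟩
        refine ⟨h1, lt_of_lt_of_le ?_ h2⟩
        have : (0 : ℝ) < 1 / (k + 1) := by positivity
        linarith
    dsimp only at hy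
    rw [hun, (hmono.directed_le).measure_iUnion] at hy
    obtain ⟨k, hk⟩ := lt_iSup_iff.1 hy
    filter_upwards [Metric.ball_mem_nhds x (show (0 : ℝ) < 1 / (k + 1) by positivity)]
      with x' hx'
    refine hk.trans_le (measure_mono ?_)
    rintro p ⟨h1, h2⟩
    refine ⟨h1, ?_⟩
    have hxx : dist x x' < 1 / (k + 1) := by rwa [Metric.mem_ball, dist_comm] at hx'
    calc dist p.1 x' ≤ dist p.1 x + dist x x' := dist_triangle _ _ _
      _ < dist p.1 x + 1 / (k + 1) := by linarith
      _ ≤ _ := h2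
  have : areaS q α β f = fun x => (fun a : ℝ≥0∞ => a ^ (1 / q)) (ν (gaussCone α β x)) :=
    funext key
  rw [this]
  exact ENNReal.continuous_rpow_const.comp_lowerSemicontinuous LSCnu
    (ENNReal.monotone_rpow_of_nonneg (by positivity))
end
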